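/- arXiv:2008.00879 — 5 statements merged into one kernel-verified Lean document; each statement's English description precedes it below -/
import Mathlib

section
/- For integers N_H ≥ 1 and f ≥ 1, the number z(N_H, f) of N_H × f stopping matrices satisfies the recursion z(N_H, f) = N_H^f − Σ_{i=1}^{min(N_H, f)} i! · C(N_H, i) · C(f, i) · z(N_H − i, f − i), where C(·,·) denotes the binomial coefficient. -/
/-!
A column-regular `m × n` matrix is the incidence matrix of a map `g : Fin n → Fin m` (column `j`
has its one in row `g j`), and row `i` has weight `#(g⁻¹ i)`; stopping matrices are the maps with no
singleton fibre. Sort all `m ^ n` maps by the set `s` of values with a singleton fibre. If `#s = i`,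
then `g` is a bijection from `T = g⁻¹ s`, an `i`-subset of the columns, onto `s`, together with a
map without singleton fibres from the complement of `T` to the complement of `s`. Hence
`m ^ n = ∑ᵢ i! C(m,i) C(n,i) z(m-i, n-i)`, whose `i = 0` term is `z(m, n)`.
-/

/-- The weight of row `i` of a binary matrix `F`: the number of nonzero entries in row `i`. -/
def rowWeight {m n : ℕ} (F : Matrix (Fin m) (Fin n) Bool) (i : Fin m) : ℕ :=
  (Finset.univ.filter (fun j => F i j = true)).card

/-- The weight of column `j` of a binary matrix `F`: the number of nonzero entries in column `j`. -/
def colWeight {m n : ℕ} (F : Matrix (Fin m) (Fin n) Bool) (j : Fin n) : ℕ :=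
  (Finset.univ.filter (fun i => F i j = true)).card

/-- A binary matrix is column-regular if every column contains exactly one nonzero entry. -/
def ColRegular {m n : ℕ} (F : Matrix (Fin m) (Fin n) Bool) : Prop :=
  ∀ j, colWeight F j = 1

/-- A stopping matrix: a column-regular binary matrix with no row of weight one. -/
def IsStopping {m n : ℕ} (F : Matrix (Fin m) (Fin n) Bool) : Prop :=
  ColRegular F ∧ ∀ i, rowWeight F i ≠ 1

instance {m n : ℕ} (F : Matrix (Fin m) (Fin n) Bool) : Decidable (ColRegular F) :=
  inferInstanceAs (Decidable (∀ j, colWeight F j = 1))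

instance {m n : ℕ} (F : Matrix (Fin m) (Fin n) Bool) : Decidable (IsStopping F) :=
  inferInstanceAs (Decidable (ColRegular F ∧ ∀ i, rowWeight F i ≠ 1))

/-- `z m n` is the number of `m × n` stopping matrices. -/
def z (m n : ℕ) : ℕ :=
  Fintype.card {F : Matrix (Fin m) (Fin n) Bool // IsStopping F}

/-- `Psi h e b` is the number of `h`-tuples `(C 1, …, C h)` of subsets of a fixed
`e`-element set with `|C i| = b i` for every `i` and whose union is the whole set. -/
def Psi (h e : ℕ) (b : Fin h → ℕ) : ℕ :=
  Fintype.card {C : Fin h → Finset (Fin e) //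
    (∀ i, (C i).card = b i) ∧ Finset.univ.biUnion C = Finset.univ}

/-- In a column-regular matrix, column `j` is pivotal if the (unique) row containing the
nonzero entry of column `j` has weight one. -/
def Pivotal {m n : ℕ} (F : Matrix (Fin m) (Fin n) Bool) (j : Fin n) : Prop :=
  ∃ i, F i j = true ∧ rowWeight F i = 1

instance {m n : ℕ} (F : Matrix (Fin m) (Fin n) Bool) (j : Fin n) : Decidable (Pivotal F j) :=
  inferInstanceAs (Decidable (∃ i, F i j = true ∧ rowWeight F i = 1))

/-- Given an `h`-tuple of matrices, column `j` is initially extractable if it is pivotal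
in at least one matrix of the tuple. -/
def Extractable {m n h : ℕ} (G : Fin h → Matrix (Fin m) (Fin n) Bool) (j : Fin n) : Prop :=
  ∃ i, Pivotal (G i) j

instance {m n h : ℕ} (G : Fin h → Matrix (Fin m) (Fin n) Bool) (j : Fin n) :
    Decidable (Extractable G j) :=
  inferInstanceAs (Decidable (∃ i, Pivotal (G i) j))

/-- The count `Θ(N_H, f, h, e)` from Lemma 2. -/
def Theta (NH f h e : ℕ) : ℕ :=
  f.choose e * ∑ b ∈ Fintype.piFinset (fun _ : Fin h => Finset.range (e + 1)),
    Psi h e b * ∏ i, (NH.choose (b i) * (b i).factorial * z (NH - b i) (f - b i))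

open Finset Function Fintype
open scoped Nat

section SingletonFibers

variable {α β : Type*} [Fintype α] [DecidableEq β]

theorem card_fiber_subtype {p : α → Prop} [DecidablePred p] (g : α → β) {b : β}
    (hp : ∀ a, g a = b → p a) : #{a : Subtype p | g a = b} = #{a | g a = b} := by
  calc #{a : Subtype p | g a = b} = #(({a | g a = b} : Finset α).subtype p) := by
        congr 1; ext; simp
    _ = #{a | g a = b} := by
        rw [card_subtype, filter_true_of_mem]
        simpa using hp

variable [Fintype β]

def singletonFibers (g : α → β) : Finset β := {b | #{a | g a = b} = 1}

theorem mem_singletonFibers {g : α → β} {b : β} :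
    b ∈ singletonFibers g ↔ #{a | g a = b} = 1 := by
  simp [singletonFibers]

theorem singletonFibers_arrowCongr {α' β' : Type*} [Fintype α'] [Fintype β'] [DecidableEq β']
    (eα : α ≃ α') (eβ : β ≃ β') (g : α → β) :
    singletonFibers (eα.arrowCongr eβ g) = (singletonFibers g).map eβ.toEmbedding := by
  ext b'
  rw [mem_map_equiv, mem_singletonFibers, mem_singletonFibers]
  congr! 1
  refine card_equiv eα.symm fun a' => ?_
  simp [← Equiv.eq_symm_apply]

end SingletonFibers

section Matrix

variable {m n : ℕ}

def incidence (g : Fin n → Fin m) : Matrix (Fin m) (Fin n) Bool := fun i j => decide (g j = i)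

theorem rowWeight_incidence (g : Fin n → Fin m) (i : Fin m) :
    rowWeight (incidence g) i = #{j | g j = i} := by
  simp [rowWeight, incidence]

theorem colRegular_incidence (g : Fin n → Fin m) : ColRegular (incidence g) := by
  intro j
  simp [colWeight, incidence, filter_eq]

theorem isStopping_incidence_iff {g : Fin n → Fin m} :
    IsStopping (incidence g) ↔ singletonFibers g = ∅ := by
  simp [IsStopping, colRegular_incidence, rowWeight_incidence, eq_empty_iff_forall_notMem,
    mem_singletonFibers]

theorem incidence_injective : Injective (incidence (m := m) (n := n)) := by
  intro g g' h
  funext j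
  simpa [incidence, eq_comm] using congr_fun (congr_fun h (g j)) j

theorem exists_incidence_of_colRegular {F : Matrix (Fin m) (Fin n) Bool} (hF : ColRegular F) :
    ∃ g, incidence g = F := by
  choose g hg huniq using fun j => (existsUnique_iff_card_one (F · j = true)).2 (hF j)
  refine ⟨g, funext₂ fun i j => ?_⟩
  by_cases h : F i j = true
  · simpa [incidence, huniq j i h] using hg j
  · simpa [incidence, h] using fun hij : g j = i => h (hij ▸ hg j)

theorem card_fin_singletonFibers_eq_empty :
    Nat.card {g : Fin n → Fin m // singletonFibers g = ∅} = z m n := by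
  rw [z, ← Nat.card_eq_fintype_card]
  refine Nat.card_congr (Equiv.ofBijective
    (fun g => ⟨incidence g.1, isStopping_incidence_iff.2 g.2⟩) ⟨?_, ?_⟩)
  · exact fun g g' h => Subtype.ext (incidence_injective (congrArg Subtype.val h))
  · rintro ⟨F, hF⟩
    obtain ⟨g, rfl⟩ := exists_incidence_of_colRegular hF.1
    exact ⟨⟨g, isStopping_incidence_iff.1 hF⟩, rfl⟩

end Matrix

theorem card_singletonFibers_eq_empty (α β : Type*) [Fintype α] [Fintype β] [DecidableEq β] :
    Nat.card {g : α → β // singletonFibers g = ∅} = z (card β) (card α) := by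
  rw [← card_fin_singletonFibers_eq_empty]
  exact Nat.card_congr <| Equiv.subtypeEquiv ((equivFin α).arrowCongr (equivFin β)) fun g => by
    simp [singletonFibers_arrowCongr]

section PreimageSplit

variable {α β : Type*} [DecidableEq α] (s : Finset β) (T : Finset α)

def preimageSplitEquiv :
    {g : α → β // ∀ a, g a ∈ s ↔ a ∈ T} ≃ (T → s) × ({a // a ∉ T} → {b // b ∉ s}) where
  toFun g := (fun a => ⟨g.1 a, (g.2 a).2 a.2⟩, fun a => ⟨g.1 a, fun h => a.2 ((g.2 a).1 h)⟩)
  invFun p := ⟨fun a => if h : a ∈ T then p.1 ⟨a, h⟩ else p.2 ⟨a, h⟩, fun a => by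
    by_cases h : a ∈ T <;> simp [h, (p.1 _).2, (p.2 _).2]⟩
  left_inv g := by
    ext a
    by_cases h : a ∈ T <;> simp [h]
  right_inv p := by
    ext a <;> simp [a.2]

variable {s T} [Fintype α] [DecidableEq β]

theorem card_fiber_preimageSplitEquiv_fst (g : {g : α → β // ∀ a, g a ∈ s ↔ a ∈ T}) {b : β}
    (hb : b ∈ s) : #{a | (preimageSplitEquiv s T g).1 a = ⟨b, hb⟩} = #{a | g.1 a = b} := by
  simp only [preimageSplitEquiv, Equiv.coe_fn_mk, Subtype.ext_iff]
  convert card_fiber_subtype g.1 fun a ha => (g.2 a).1 (ha ▸ hb)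

theorem card_fiber_preimageSplitEquiv_snd (g : {g : α → β // ∀ a, g a ∈ s ↔ a ∈ T}) {b : β}
    (hb : b ∉ s) : #{a | (preimageSplitEquiv s T g).2 a = ⟨b, hb⟩} = #{a | g.1 a = b} := by
  simp only [preimageSplitEquiv, Equiv.coe_fn_mk, Subtype.ext_iff]
  exact card_fiber_subtype g.1 fun a ha hT => hb (ha ▸ (g.2 a).2 hT)

variable [Fintype β]

theorem singletonFibers_eq_iff (g : {g : α → β // ∀ a, g a ∈ s ↔ a ∈ T}) :
    singletonFibers g.1 = s ↔
      Bijective (preimageSplitEquiv s T g).1 ∧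
        singletonFibers (preimageSplitEquiv s T g).2 = ∅ := by
  have hbij : Bijective (preimageSplitEquiv s T g).1 ↔ ∀ b ∈ s, #{a | g.1 a = b} = 1 := by
    simp only [bijective_iff_existsUnique, Subtype.forall, existsUnique_iff_card_one,
      card_fiber_preimageSplitEquiv_fst]
  have hstop : singletonFibers (preimageSplitEquiv s T g).2 = ∅ ↔
      ∀ b ∉ s, #{a | g.1 a = b} ≠ 1 := by
    simp only [eq_empty_iff_forall_notMem, mem_singletonFibers, Subtype.forall,
      card_fiber_preimageSplitEquiv_snd]
  rw [hbij, hstop, Finset.ext_iff]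
  simp only [mem_singletonFibers]
  exact ⟨fun h => ⟨fun b hb => (h b).2 hb, fun b hb => mt (h b).1 hb⟩,
    fun h b => ⟨fun hb => by_contra (h.2 b · hb), h.1 b⟩⟩

end PreimageSplit

theorem Nat.card_equiv (γ δ : Type*) [Fintype γ] [Fintype δ] :
    Nat.card (γ ≃ δ) = if card γ = card δ then (card γ)! else 0 := by
  classical
  split_ifs with h
  · obtain ⟨e⟩ := Fintype.card_eq.1 h
    rw [Nat.card_eq_fintype_card, Fintype.card_equiv e]
  · have : IsEmpty (γ ≃ δ) := ⟨fun e => h (Fintype.card_congr e)⟩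
    exact Nat.card_of_isEmpty

section Counting

variable {α β : Type*} [Fintype α] [Fintype β] [DecidableEq β]

theorem card_singletonFibers_eq_of_preimage [DecidableEq α] (s : Finset β) (T : Finset α) :
    Nat.card {g : α → β // (∀ a, g a ∈ s ↔ a ∈ T) ∧ singletonFibers g = s} =
      Nat.card (T ≃ s) * z (card β - #s) (card α - #T) := by
  calc _ = Nat.card {g : {g : α → β // ∀ a, g a ∈ s ↔ a ∈ T} // singletonFibers g.1 = s} :=
        Nat.card_congr (Equiv.subtypeSubtypeEquivSubtypeInter _ _).symm
    _ = Nat.card {p : (T → s) × ({a // a ∉ T} → {b // b ∉ s}) //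
          Bijective p.1 ∧ singletonFibers p.2 = ∅} :=
        Nat.card_congr (Equiv.subtypeEquiv (preimageSplitEquiv s T) singletonFibers_eq_iff)
    _ = Nat.card (T ≃ s) * z (card β - #s) (card α - #T) := by
        rw [Nat.card_congr (Equiv.subtypeProdEquivProd (p := Bijective)
          (q := fun w => singletonFibers w = ∅)), Nat.card_prod,
          Nat.card_congr Equiv.bijectiveEquiv, card_singletonFibers_eq_empty]
        simp [Fintype.card_subtype_compl]

theorem card_singletonFibers_eq (s : Finset β) :
    Nat.card {g : α → β // singletonFibers g = s} =
      (card α).choose #s * ((#s)! * z (card β - #s) (card α - #s)) := by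
  classical
  have hfiber (T : Finset α) :
      Nat.card {g : {g : α → β // singletonFibers g = s} // ({a | g.1 a ∈ s} : Finset α) = T} =
        if #T = #s then (#s)! * z (card β - #s) (card α - #s) else 0 := by
    have e : {g : {g : α → β // singletonFibers g = s} // ({a | g.1 a ∈ s} : Finset α) = T} ≃
        {g : α → β // (∀ a, g a ∈ s ↔ a ∈ T) ∧ singletonFibers g = s} :=
      (Equiv.subtypeSubtypeEquivSubtypeInter _
        fun g : α → β => ({a | g a ∈ s} : Finset α) = T).trans
          (Equiv.subtypeEquivRight fun g => by simp [Finset.ext_iff, and_comm])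
    rw [Nat.card_congr e, card_singletonFibers_eq_of_preimage, Nat.card_equiv]
    split_ifs with h <;> simp_all
  rw [← Nat.card_congr (Equiv.sigmaFiberEquiv fun g : {g : α → β // singletonFibers g = s} =>
    ({a | g.1 a ∈ s} : Finset α)), Nat.card_sigma]
  have hcount : #{T : Finset α | #T = #s} = (card α).choose #s := by
    rw [← card_univ, ← card_powersetCard]
    congr 1
    ext
    simp
  simp only [hfiber, ← sum_filter, sum_const, smul_eq_mul, hcount]

theorem pow_card_eq_sum :
    card β ^ card α = ∑ i ∈ range (card β + 1),
      i ! * (card β).choose i * (card α).choose i * z (card β - i) (card α - i) := by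
  classical
  rw [← Fintype.card_fun, ← Nat.card_eq_fintype_card,
    ← Nat.card_congr (Equiv.sigmaFiberEquiv (singletonFibers (α := α) (β := β))), Nat.card_sigma]
  simp only [card_singletonFibers_eq]
  rw [← powerset_univ,
    sum_powerset_apply_card fun i => (card α).choose i * (i ! * z (card β - i) (card α - i)),
    card_univ]
  exact sum_congr rfl fun i _ => by rw [smul_eq_mul]; ring

end Counting

theorem z_add_sum_eq_pow (m n : ℕ) :
    z m n + ∑ i ∈ Icc 1 (min m n), i ! * m.choose i * n.choose i * z (m - i) (n - i) = m ^ n := by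
  have hsum := pow_card_eq_sum (α := Fin n) (β := Fin m)
  simp only [Fintype.card_fin] at hsum
  rw [hsum, range_eq_Ico, sum_eq_sum_Ico_succ_bot m.succ_pos]
  congr 1
  · simp
  · refine sum_subset (fun i hi => by simp only [mem_Icc, mem_Ico] at hi ⊢; omega)
      fun i hi hi' => ?_
    simp only [mem_Icc, mem_Ico, not_and, not_le, le_min_iff] at hi hi'
    rw [Nat.choose_eq_zero_of_lt (by omega : n < i), mul_zero, zero_mul]

theorem stopping_matrix_recursion_general (NH f : ℕ) :
    (z NH f : ℤ) =
      (NH : ℤ) ^ f -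
        ∑ i ∈ Finset.Icc 1 (min NH f),
          (i.factorial : ℤ) * (NH.choose i : ℤ) * (f.choose i : ℤ) *
            (z (NH - i) (f - i) : ℤ) := by
  rw [eq_sub_iff_add_eq]
  exact_mod_cast z_add_sum_eq_pow NH f

/-- For `N_H ≥ 1` and `f ≥ 1`, the number `z(N_H, f)` of `N_H × f`
stopping matrices satisfies
`z(N_H, f) = N_H^f − Σ_{i=1}^{min(N_H,f)} i! · C(N_H,i) · C(f,i) · z(N_H−i, f−i)`. -/
theorem stopping_matrix_recursion (NH f : ℕ) (hNH : 1 ≤ NH) (hf : 1 ≤ f) :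
    (z NH f : ℤ) =
      (NH : ℤ) ^ f -
        ∑ i ∈ Finset.Icc 1 (min NH f),
          (i.factorial : ℤ) * (NH.choose i : ℤ) * (f.choose i : ℤ) *
            (z (NH - i) (f - i) : ℤ) :=
  stopping_matrix_recursion_general NH f
end

section
/- Let N_H, f ∈ ℕ with N_H ≥ 1, f ≥ 1, and let 0 ≤ e ≤ min(N_H, f). The number of N_H × f column-regular binary matrices having exactly e rows of weight one equals C(f, e) · C(N_H, e) · e! · z(N_H − e, f − e), where C(·,·) is the binomial coefficient. -/
def fiberCount {α β : Type*} [Fintype α] [DecidableEq β] (c : α → β) (i : β) : ℕ :=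
  (Finset.univ.filter (fun j => c j = i)).card

lemma fiberCount_comp {α α' β β' : Type*} [Fintype α] [Fintype α'] [DecidableEq β] [DecidableEq β']
    (e₁ : α ≃ α') (e₂ : β ≃ β') (c : α → β) (i : β') :
    fiberCount (fun j => e₂ (c (e₁.symm j))) i = fiberCount c (e₂.symm i) := by
  unfold fiberCount
  refine (Finset.card_equiv e₁ ?_).symm
  intro a
  simp [Equiv.eq_symm_apply]

def toMat {m n : ℕ} (c : Fin n → Fin m) : Matrix (Fin m) (Fin n) Bool :=
  fun i j => decide (c j = i)

lemma toMat_colRegular {m n : ℕ} (c : Fin n → Fin m) : ColRegular (toMat c) := by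
  intro j
  unfold colWeight toMat
  simp only [decide_eq_true_eq]
  rw [Finset.filter_eq Finset.univ (c j)]
  simp

lemma rowWeight_toMat {m n : ℕ} (c : Fin n → Fin m) (i : Fin m) :
    rowWeight (toMat c) i = fiberCount c i := by
  unfold rowWeight toMat fiberCount
  simp

lemma toMat_injective {m n : ℕ} : Function.Injective (toMat (m := m) (n := n)) := by
  intro c c' h
  funext j
  have := congrFun (congrFun h (c j)) j
  unfold toMat at this
  have h2 : c' j = c j := by simpa using this
  exact h2.symm

lemma toMat_surjective {m n : ℕ} (F : Matrix (Fin m) (Fin n) Bool) (hF : ColRegular F) :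
    ∃ c, toMat c = F := by
  have h : ∀ j : Fin n, ∃ a, Finset.univ.filter (fun i => F i j = true) = {a} := by
    intro j
    exact Finset.card_eq_one.mp (hF j)
  choose c hc using h
  refine ⟨c, ?_⟩
  funext i j
  have : F i j = true ↔ i = c j := by
    constructor
    · intro h'
      have : i ∈ Finset.univ.filter (fun i => F i j = true) := by simp [h']
      rw [hc j] at this; simpa using this
    · rintro rfl
      have : c j ∈ Finset.univ.filter (fun i => F i j = true) := by rw [hc j]; simp
      simpa using this
  unfold toMat
  cases h' : F i j
  · simp only [decide_eq_false_iff_not]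
    intro hh
    exact absurd (this.mpr hh.symm) (by simp [h'])
  · simp [this.mp h', eq_comm]

lemma card_colRegular_prop {m n : ℕ} (P : Matrix (Fin m) (Fin n) Bool → Prop) [DecidablePred P] :
    Fintype.card {F : Matrix (Fin m) (Fin n) Bool // ColRegular F ∧ P F} =
      Fintype.card {c : Fin n → Fin m // P (toMat c)} := by
  refine (Fintype.card_congr (Equiv.ofBijective
    (fun c => ⟨toMat c.1, toMat_colRegular c.1, c.2⟩) ⟨?_, ?_⟩)).symm
  · intro c c' h
    exact Subtype.ext (toMat_injective (congrArg Subtype.val h))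
  · rintro ⟨F, hF, hP⟩
    obtain ⟨c, rfl⟩ := toMat_surjective F hF
    exact ⟨⟨c, hP⟩, rfl⟩

lemma z_eq (m n : ℕ) :
    z m n = Fintype.card {c : Fin n → Fin m // ∀ i, fiberCount c i ≠ 1} := by
  have : z m n = Fintype.card {F : Matrix (Fin m) (Fin n) Bool //
      ColRegular F ∧ ∀ i, rowWeight F i ≠ 1} := rfl
  rw [this, card_colRegular_prop]
  exact Fintype.card_congr (Equiv.subtypeEquivRight (fun c => by
    simp [rowWeight_toMat]))

lemma card_noSingleton {α β : Type*} [Fintype α] [Fintype β] [DecidableEq α] [DecidableEq β] :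
    Fintype.card {c : α → β // ∀ i, fiberCount c i ≠ 1} = z (Fintype.card β) (Fintype.card α) := by
  rw [z_eq]
  refine Fintype.card_congr (Equiv.subtypeEquiv
    (Equiv.arrowCongr (Fintype.equivFin α) (Fintype.equivFin β)) ?_)
  intro c
  have key : ∀ i, fiberCount ((Equiv.arrowCongr (Fintype.equivFin α) (Fintype.equivFin β)) c) i
      = fiberCount c ((Fintype.equivFin β).symm i) := by
    intro i
    exact fiberCount_comp (Fintype.equivFin α) (Fintype.equivFin β) c i
  constructor
  · intro h i
    rw [key]; exact h _
  · intro h i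
    have := h ((Fintype.equivFin β) i)
    rwa [key, Equiv.symm_apply_apply] at this

structure Decomp (m n e : ℕ) where
  S : Finset (Fin n)
  hS : S.card = e
  σ : {j // j ∈ S} ↪ Fin m
  d : {j // j ∉ S} → {i // i ∉ Finset.univ.map σ}
  hd : ∀ i, fiberCount d i ≠ 1

def decompEquiv (m n e : ℕ) : Decomp m n e ≃
    Σ S : {S : Finset (Fin n) // S.card = e}, Σ σ : ({j // j ∈ S.1} ↪ Fin m),
      {d : {j // j ∉ S.1} → {i // i ∉ Finset.univ.map σ} // ∀ i, fiberCount d i ≠ 1} where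
  toFun x := ⟨⟨x.S, x.hS⟩, x.σ, x.d, x.hd⟩
  invFun x := ⟨x.1.1, x.1.2, x.2.1, x.2.2.1, x.2.2.2⟩
  left_inv x := rfl
  right_inv x := rfl

noncomputable instance (m n e : ℕ) : Fintype (Decomp m n e) :=
  Fintype.ofEquiv _ (decompEquiv m n e).symm

lemma card_decomp (m n e : ℕ) :
    Fintype.card (Decomp m n e) = n.choose e * (m.descFactorial e * z (m - e) (n - e)) := by
  rw [Fintype.card_congr (decompEquiv m n e), Fintype.card_sigma]
  have h1 : ∀ S : {S : Finset (Fin n) // S.card = e},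
      Fintype.card (Σ σ : ({j // j ∈ S.1} ↪ Fin m),
        {d : {j // j ∉ S.1} → {i // i ∉ Finset.univ.map σ} // ∀ i, fiberCount d i ≠ 1}) =
      m.descFactorial e * z (m - e) (n - e) := by
    intro S
    rw [Fintype.card_sigma]
    have h2 : ∀ σ : ({j // j ∈ S.1} ↪ Fin m),
        Fintype.card {d : {j // j ∉ S.1} → {i // i ∉ Finset.univ.map σ} //
          ∀ i, fiberCount d i ≠ 1} = z (m - e) (n - e) := by
      intro σ
      rw [card_noSingleton]
      congr 1
      · rw [Fintype.card_subtype_compl]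
        congr 1
        · exact Fintype.card_fin m
        · have h3 : (Finset.univ.map σ).card = e := by
            rw [Finset.card_map, Finset.card_univ, Fintype.card_coe, S.2]
          exact ((Fintype.card_congr (Equiv.refl _)).trans (Fintype.card_coe _)).trans h3
      · rw [Fintype.card_subtype_compl]
        simp [S.2]
    simp only [h2, Finset.sum_const, Finset.card_univ, smul_eq_mul]
    congr 1
    rw [Fintype.card_embedding_eq, Fintype.card_fin, Fintype.card_coe, S.2]
  simp only [h1, Finset.sum_const, Finset.card_univ, smul_eq_mul]
  congr 1
  rw [Fintype.card_finset_len, Fintype.card_fin]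

def Decomp.g {m n e : ℕ} (x : Decomp m n e) : Fin n → Fin m :=
  fun j => if h : j ∈ x.S then x.σ ⟨j, h⟩ else (x.d ⟨j, h⟩).1

lemma Decomp.fiber_mem {m n e : ℕ} (x : Decomp m n e) (i : Fin m)
    (hi : i ∈ Finset.univ.map x.σ) : fiberCount x.g i = 1 := by
  obtain ⟨a, -, rfl⟩ := Finset.mem_map.mp hi
  unfold fiberCount
  rw [Finset.card_eq_one]
  refine ⟨a.1, ?_⟩
  ext j
  simp only [Finset.mem_filter, Finset.mem_univ, true_and, Finset.mem_singleton]
  constructor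
  · intro hj
    by_cases h : j ∈ x.S
    · have h1 : x.σ ⟨j, h⟩ = x.σ a := by rw [← hj]; simp [Decomp.g, h]
      exact congrArg Subtype.val (x.σ.injective h1)
    · exfalso
      have h2 : (x.d ⟨j, h⟩).1 = x.σ a := by rw [← hj]; simp [Decomp.g, h]
      have h3 := (x.d ⟨j, h⟩).2
      rw [h2] at h3
      exact h3 (Finset.mem_map_of_mem _ (Finset.mem_univ a))
  · rintro rfl
    simp [Decomp.g, a.2]

lemma Decomp.fiber_not_mem {m n e : ℕ} (x : Decomp m n e) (i : Fin m)
    (hi : i ∉ Finset.univ.map x.σ) : fiberCount x.g i = fiberCount x.d ⟨i, hi⟩ := by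
  unfold fiberCount
  refine (Finset.card_bij (fun a _ => a.1) ?_ ?_ ?_).symm
  · intro a ha
    simp only [Finset.mem_filter, Finset.mem_univ, true_and] at ha ⊢
    rw [show x.g a.1 = (x.d a).1 from by simp [Decomp.g, a.2], ha]
  · intro a _ b _ hab
    exact Subtype.ext hab
  · intro j hj
    simp only [Finset.mem_filter, Finset.mem_univ, true_and] at hj
    have hjS : j ∉ x.S := by
      intro h
      have : x.g j = x.σ ⟨j, h⟩ := by simp [Decomp.g, h]
      rw [this] at hj
      rw [← hj] at hi
      exact hi (Finset.mem_map_of_mem _ (Finset.mem_univ _))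
    refine ⟨⟨j, hjS⟩, ?_, rfl⟩
    simp only [Finset.mem_filter, Finset.mem_univ, true_and]
    refine Subtype.ext ?_
    rw [show x.g j = (x.d ⟨j, hjS⟩).1 from by simp [Decomp.g, hjS]] at hj
    exact hj

lemma Decomp.filter_g {m n e : ℕ} (x : Decomp m n e) :
    (Finset.univ.filter (fun i => fiberCount x.g i = 1)).card = e := by
  have h : Finset.univ.filter (fun i => fiberCount x.g i = 1) = Finset.univ.map x.σ := by
    ext i
    simp only [Finset.mem_filter, Finset.mem_univ, true_and]
    constructor
    · intro h
      by_contra hi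
      exact x.hd ⟨i, hi⟩ (by rw [← x.fiber_not_mem i hi]; exact h)
    · exact x.fiber_mem i
  rw [h, Finset.card_map, Finset.card_univ, Fintype.card_coe, x.hS]

lemma Decomp.mem_S_iff {m n e : ℕ} (x : Decomp m n e) (j : Fin n) :
    j ∈ x.S ↔ fiberCount x.g (x.g j) = 1 := by
  constructor
  · intro h
    refine x.fiber_mem _ ?_
    rw [show x.g j = x.σ ⟨j, h⟩ from by simp [Decomp.g, h]]
    exact Finset.mem_map_of_mem _ (Finset.mem_univ _)
  · intro h
    by_contra hj
    have h2 : x.g j = (x.d ⟨j, hj⟩).1 := by simp [Decomp.g, hj]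
    have h3 : x.g j ∉ Finset.univ.map x.σ := by rw [h2]; exact (x.d _).2
    rw [x.fiber_not_mem _ h3] at h
    exact x.hd _ h

lemma Decomp.ext' {m n e : ℕ} {x y : Decomp m n e} (hS : x.S = y.S)
    (hσ : ∀ j (hj : j ∈ x.S) (hj' : j ∈ y.S), x.σ ⟨j, hj⟩ = y.σ ⟨j, hj'⟩)
    (hd : ∀ j (hj : j ∉ x.S) (hj' : j ∉ y.S), (x.d ⟨j, hj⟩).1 = (y.d ⟨j, hj'⟩).1) : x = y := by
  obtain ⟨S, hS1, σ, d, hd1⟩ := x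
  obtain ⟨S', hS1', σ', d', hd1'⟩ := y
  simp only at hS hσ hd
  subst hS
  obtain rfl : σ = σ' := by
    ext ⟨j, hj⟩
    exact congrArg Fin.val (hσ j hj hj)
  obtain rfl : d = d' := funext fun ⟨j, hj⟩ => Subtype.ext (hd j hj hj)
  rfl

lemma decomp_bijective (m n e : ℕ) : Function.Bijective
    (fun x : Decomp m n e => (⟨x.g, x.filter_g⟩ :
      {c : Fin n → Fin m // (Finset.univ.filter (fun i => fiberCount c i = 1)).card = e})) := by
  constructor
  · intro x y h
    have hg : x.g = y.g := congrArg Subtype.val h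
    have hS : x.S = y.S := by
      ext j
      rw [x.mem_S_iff j, y.mem_S_iff j, hg]
    refine Decomp.ext' hS ?_ ?_
    · intro j hj hj'
      have h1 : x.g j = x.σ ⟨j, hj⟩ := by simp [Decomp.g, hj]
      have h2 : y.g j = y.σ ⟨j, hj'⟩ := by simp [Decomp.g, hj']
      rw [← h1, ← h2, hg]
    · intro j hj hj'
      have h1 : x.g j = (x.d ⟨j, hj⟩).1 := by simp [Decomp.g, hj]
      have h2 : y.g j = (y.d ⟨j, hj'⟩).1 := by simp [Decomp.g, hj']
      rw [← h1, ← h2, hg]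
  · rintro ⟨g, hg⟩
    have hinj : ∀ j j' : Fin n, fiberCount g (g j) = 1 → g j = g j' → j = j' := by
      intro j j' h1 h2
      refine Finset.card_le_one.mp (le_of_eq h1) j ?_ j' ?_
      · simp
      · simp [← h2]
    have hfib : ∀ i : Fin m, fiberCount g i = 1 → ∃ j, g j = i := by
      intro i hi
      have h1 : (Finset.univ.filter (fun j => g j = i)).Nonempty := by
        rw [← Finset.card_pos]
        unfold fiberCount at hi
        omega
      obtain ⟨j, hj⟩ := h1
      simp only [Finset.mem_filter, Finset.mem_univ, true_and] at hj
      exact ⟨j, hj⟩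
    set S : Finset (Fin n) := Finset.univ.filter (fun j => fiberCount g (g j) = 1) with hSdef
    have hmemS : ∀ j, j ∈ S ↔ fiberCount g (g j) = 1 := by
      intro j; simp [hSdef]
    have hScard : S.card = e := by
      rw [← hg]
      apply Finset.card_bij (fun j _ => g j)
      · intro a ha
        rw [hmemS] at ha
        simp only [Finset.mem_filter, Finset.mem_univ, true_and]
        exact ha
      · intro a ha b _ hab
        rw [hmemS] at ha
        exact hinj a b ha hab
      · intro i hi
        simp only [Finset.mem_filter, Finset.mem_univ, true_and] at hi
        obtain ⟨j, hj⟩ := hfib i hi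
        refine ⟨j, ?_, hj⟩
        exact (hmemS j).mpr (by rw [hj]; exact hi)
    have hσinj : Function.Injective (fun a : {j // j ∈ S} => g a.1) := by
      intro a b hab
      have ha := (hmemS a.1).mp a.2
      exact Subtype.ext (hinj a.1 b.1 ha hab)
    set σ : {j // j ∈ S} ↪ Fin m := ⟨fun a => g a.1, hσinj⟩ with hσdef
    have hmap : ∀ i : Fin m, i ∈ Finset.univ.map σ ↔ fiberCount g i = 1 := by
      intro i
      simp only [Finset.mem_map, Finset.mem_univ, true_and]
      constructor
      · rintro ⟨a, -, rfl⟩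
        exact (hmemS a.1).mp a.2
      · intro hi
        obtain ⟨j, hj⟩ := hfib i hi
        exact ⟨⟨j, (hmemS j).mpr (by rw [hj]; exact hi)⟩, hj⟩
    set d : {j // j ∉ S} → {i // i ∉ Finset.univ.map σ} :=
      fun j => ⟨g j.1, by rw [hmap]; exact fun h => j.2 ((hmemS j.1).mpr h)⟩ with hddef
    have hdfib : ∀ i : {i // i ∉ Finset.univ.map σ}, fiberCount d i = fiberCount g i.1 := by
      intro i
      unfold fiberCount
      apply Finset.card_bij (fun a _ => a.1)
      · intro a ha
        simp only [Finset.mem_filter, Finset.mem_univ, true_and] at ha ⊢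
        exact congrArg Subtype.val ha
      · intro a _ b _ hab
        exact Subtype.ext hab
      · intro j hj
        simp only [Finset.mem_filter, Finset.mem_univ, true_and] at hj
        have hjS : j ∉ S := by
          rw [hmemS, hj]
          exact fun h => i.2 ((hmap i.1).mpr h)
        refine ⟨⟨j, hjS⟩, ?_, rfl⟩
        simp only [Finset.mem_filter, Finset.mem_univ, true_and]
        exact Subtype.ext hj
    have hd : ∀ i, fiberCount d i ≠ 1 := by
      intro i
      rw [hdfib]
      exact fun h => i.2 ((hmap i.1).mpr h)
    refine ⟨⟨S, hScard, σ, d, hd⟩, ?_⟩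
    refine Subtype.ext ?_
    funext j
    show (Decomp.mk S hScard σ d hd).g j = g j
    by_cases h : j ∈ S <;> simp [Decomp.g, h, hσdef, hddef]

/-- For `N_H ≥ 1`, `f ≥ 1` and `0 ≤ e ≤ min(N_H, f)`, the number of
`N_H × f` column-regular binary matrices having exactly `e` rows of weight one equals
`C(f,e) · C(N_H,e) · e! · z(N_H − e, f − e)`. -/
theorem count_colRegular_with_exactly_e_weight_one_rows (NH f e : ℕ)
    (hNH : 1 ≤ NH) (hf : 1 ≤ f) (he : e ≤ min NH f) :
    Fintype.card {F : Matrix (Fin NH) (Fin f) Bool //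
        ColRegular F ∧ (Finset.univ.filter (fun i => rowWeight F i = 1)).card = e} =
      f.choose e * NH.choose e * e.factorial * z (NH - e) (f - e) := by
  calc Fintype.card {F : Matrix (Fin NH) (Fin f) Bool //
        ColRegular F ∧ (Finset.univ.filter (fun i => rowWeight F i = 1)).card = e}
      = Fintype.card {c : Fin f → Fin NH //
          (Finset.univ.filter (fun i => fiberCount c i = 1)).card = e} := by
        rw [card_colRegular_prop]
        exact Fintype.card_congr (Equiv.subtypeEquivRight (fun c => by
          simp only [rowWeight_toMat]))
    _ = Fintype.card (Decomp NH f e) :=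
        (Fintype.card_congr (Equiv.ofBijective _ (decomp_bijective NH f e))).symm
    _ = f.choose e * (NH.descFactorial e * z (NH - e) (f - e)) := card_decomp NH f e
    _ = f.choose e * NH.choose e * e.factorial * z (NH - e) (f - e) := by
        rw [Nat.descFactorial_eq_factorial_mul_choose]; ring
end

section
/- For all integers N_H ≥ 1 and f ≥ 1, Σ_{e=0}^{min(N_H, f)} C(f, e) · C(N_H, e) · e! · z(N_H − e, f − e) = N_H^f; that is, the counts of column-regular N_H × f binary matrices classified by their exact number e of weight-one rows sum to the total number N_H^f of column-regular matrices. -/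
/-! A column-regular matrix is the incidence matrix of a map `g` from columns to rows, and its
weight-one rows are the values that `g` attains exactly once. Fix the set `S` of these values,
with `|S| = e`, and its preimage `T`. Then `g` splits into a bijection `T → S` and a map from the
other `f - e` columns to the other `N_H - e` rows attaining no value exactly once, that is, a
stopping matrix. This gives `C(N_H, e) · C(f, e) · e! · z(N_H - e, f - e)` maps for each `e`;
the terms with `e > f` vanish because `C(f, e) = 0`. -/

open Finset Nat

lemma existsUnique_restrict_iff {α β : Type*} {P : α → Prop} {Q : β → Prop} {g : α → β}
    {r : Subtype P → Subtype Q} (hr : ∀ x, (r x : β) = g x) {b : Subtype Q}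
    (hP : ∀ a, g a = b → P a) : (∃! x, r x = b) ↔ ∃! a, g a = b := by
  simp only [Subtype.ext_iff, hr]
  constructor
  · rintro ⟨x, hx, huniq⟩
    exact ⟨x, hx, fun a ha => congrArg Subtype.val (huniq ⟨a, hP a ha⟩ ha)⟩
  · rintro ⟨a, ha, huniq⟩
    exact ⟨⟨a, hP a ha⟩, ha, fun x hx => Subtype.ext (huniq x hx)⟩

def restrictPreimageEquiv {α β : Type*} [DecidableEq α] (S : Finset β) (T : Finset α) :
    {g : α → β // ∀ a, g a ∈ S ↔ a ∈ T} ≃ (T → S) × ({a // a ∉ T} → {b // b ∉ S}) where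
  toFun g := (fun a => ⟨g.1 a, (g.2 a).2 a.2⟩, fun a => ⟨g.1 a, mt (g.2 a).1 a.2⟩)
  invFun pq := ⟨fun a => if h : a ∈ T then pq.1 ⟨a, h⟩ else pq.2 ⟨a, h⟩, fun a => by
    by_cases h : a ∈ T <;> simp [h, (pq.2 _).2]⟩
  left_inv g := by ext a; by_cases h : a ∈ T <;> simp [h]
  right_inv pq := by ext x <;> simp [x.2]

lemma card_equiv_eq_ite (α β : Type*) [Fintype α] [Fintype β] [DecidableEq α] [DecidableEq β] :
    Fintype.card (α ≃ β) = if Fintype.card α = Fintype.card β then (Fintype.card α)! else 0 := by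
  split_ifs with h
  · exact Fintype.card_equiv (Fintype.equivOfCardEq h)
  · have : IsEmpty (α ≃ β) := ⟨fun e => h (Fintype.card_congr e)⟩
    exact Fintype.card_eq_zero

section SimpleValues

variable {α β : Type*} [Fintype α] [Fintype β] [DecidableEq β]

def simpleValues (g : α → β) : Finset β := {b | #{a | g a = b} = 1}

lemma mem_simpleValues {g : α → β} {b : β} : b ∈ simpleValues g ↔ ∃! a, g a = b := by
  simp [simpleValues, card_eq_one_iff_existsUnique]

lemma simpleValues_eq_empty_iff {g : α → β} : simpleValues g = ∅ ↔ ∀ b, ¬∃! a, g a = b := by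
  simp [eq_empty_iff_forall_notMem, mem_simpleValues]

end SimpleValues

section Matrix

variable {m n : ℕ}

def funMatrix (g : Fin n → Fin m) : Matrix (Fin m) (Fin n) Bool :=
  Matrix.of fun i j => decide (g j = i)

lemma funMatrix_injective : Function.Injective (funMatrix (m := m) (n := n)) := by
  intro g g' h
  funext j
  simpa [funMatrix, eq_comm] using congrFun (congrFun h (g j)) j

lemma colRegular_funMatrix (g : Fin n → Fin m) : ColRegular (funMatrix g) := by
  intro j
  simp [colWeight, funMatrix, filter_eq]

lemma rowWeight_funMatrix (g : Fin n → Fin m) (i : Fin m) :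
    rowWeight (funMatrix g) i = #{j | g j = i} := by
  simp [rowWeight, funMatrix]

lemma exists_funMatrix_eq {F : Matrix (Fin m) (Fin n) Bool} (hF : ColRegular F) :
    ∃ g, funMatrix g = F := by
  choose g hg using fun j => card_eq_one.mp (hF j)
  refine ⟨g, Matrix.ext fun i j => ?_⟩
  have key := Finset.ext_iff.mp (hg j) i
  simp only [mem_filter, mem_univ, true_and, mem_singleton] at key
  simp only [funMatrix, Matrix.of_apply, eq_comm (a := g j), ← key, Bool.decide_eq_true]

lemma isStopping_funMatrix_iff {g : Fin n → Fin m} :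
    IsStopping (funMatrix g) ↔ simpleValues g = ∅ := by
  simp [IsStopping, colRegular_funMatrix, rowWeight_funMatrix, simpleValues, filter_eq_empty_iff]

lemma z_eq_card_simpleValues_eq_empty :
    z m n = Fintype.card {g : Fin n → Fin m // simpleValues g = ∅} := by
  symm
  refine Fintype.card_of_bijective
    (f := fun g => ⟨funMatrix g.1, isStopping_funMatrix_iff.mpr g.2⟩)
    ⟨fun g g' h => Subtype.ext (funMatrix_injective (congrArg Subtype.val h)), fun ⟨F, hF⟩ => ?_⟩
  obtain ⟨g, rfl⟩ := exists_funMatrix_eq hF.1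
  exact ⟨⟨g, isStopping_funMatrix_iff.mp hF⟩, rfl⟩

end Matrix

section Count

variable {α β : Type*} [Fintype α] [Fintype β] [DecidableEq α] [DecidableEq β]

lemma card_simpleValues_eq_empty_congr {α' β' : Type*} [Fintype α'] [Fintype β']
    [DecidableEq α'] [DecidableEq β'] (ea : α ≃ α') (eb : β ≃ β') :
    Fintype.card {g : α → β // simpleValues g = ∅} =
      Fintype.card {g : α' → β' // simpleValues g = ∅} := by
  refine Fintype.card_congr ((ea.arrowCongr eb).subtypeEquiv fun g => ?_)
  simp only [simpleValues_eq_empty_iff, eb.forall_congr_left, Equiv.arrowCongr_apply,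
    Function.comp_apply]
  refine forall_congr' fun b => not_congr ?_
  exact ea.existsUnique_congr fun a => by simp [Equiv.eq_symm_apply]

lemma card_simpleValues_eq_empty :
    Fintype.card {g : α → β // simpleValues g = ∅} = z (Fintype.card β) (Fintype.card α) := by
  rw [z_eq_card_simpleValues_eq_empty]
  exact card_simpleValues_eq_empty_congr (Fintype.equivFin α) (Fintype.equivFin β)

lemma simpleValues_eq_iff_restrictPreimageEquiv (S : Finset β) (T : Finset α)
    (g : {g : α → β // ∀ a, g a ∈ S ↔ a ∈ T}) :
    simpleValues g.1 = S ↔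
      Function.Bijective (restrictPreimageEquiv S T g).1 ∧ simpleValues (restrictPreimageEquiv S T g).2 = ∅ := by
  have hS (s : S) : (∃! t, (restrictPreimageEquiv S T g).1 t = s) ↔ ∃! a, g.1 a = s :=
    existsUnique_restrict_iff (g := g.1) (fun _ => rfl) fun a ha => (g.2 a).1 (ha ▸ s.2)
  have hSc (b : {b // b ∉ S}) : (∃! t, (restrictPreimageEquiv S T g).2 t = b) ↔ ∃! a, g.1 a = b :=
    existsUnique_restrict_iff (g := g.1) (fun _ => rfl) fun a ha => mt (g.2 a).2 (ha ▸ b.2)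
  rw [Function.bijective_iff_existsUnique, simpleValues_eq_empty_iff, Finset.ext_iff]
  simp only [mem_simpleValues, hS, hSc]
  constructor
  · intro h
    exact ⟨fun s => (h s).2 s.2, fun b hb => b.2 ((h b).1 hb)⟩
  · rintro ⟨hp, hq⟩ b
    by_cases hb : b ∈ S
    · exact iff_of_true (hp ⟨b, hb⟩) hb
    · exact iff_of_false (hq ⟨b, hb⟩) hb

lemma card_simpleValues_eq_of_preimage (S : Finset β) (T : Finset α) :
    Fintype.card {g : α → β // simpleValues g = S ∧ ∀ a, g a ∈ S ↔ a ∈ T} =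
      Fintype.card (T ≃ S) * z (Fintype.card β - #S) (Fintype.card α - #T) := by
  calc Fintype.card {g : α → β // simpleValues g = S ∧ ∀ a, g a ∈ S ↔ a ∈ T}
      = Fintype.card {g : {g : α → β // ∀ a, g a ∈ S ↔ a ∈ T} // simpleValues g.1 = S} :=
        Fintype.card_congr ((Equiv.subtypeSubtypeEquivSubtypeInter _ _).trans
          (Equiv.subtypeEquivRight fun _ => and_comm)).symm
    _ = Fintype.card {pq : (T → S) × ({a // a ∉ T} → {b // b ∉ S}) //
          Function.Bijective pq.1 ∧ simpleValues pq.2 = ∅} :=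
        Fintype.card_congr
          ((restrictPreimageEquiv S T).subtypeEquiv (simpleValues_eq_iff_restrictPreimageEquiv S T))
    _ = Fintype.card (T ≃ S) *
          Fintype.card {q : {a // a ∉ T} → {b // b ∉ S} // simpleValues q = ∅} := by
        rw [← Fintype.card_congr Equiv.bijectiveEquiv, ← Fintype.card_prod]
        exact Fintype.card_congr
          (Equiv.subtypeProdEquivProd (p := Function.Bijective) (q := fun q => simpleValues q = ∅))
    _ = Fintype.card (T ≃ S) * z (Fintype.card β - #S) (Fintype.card α - #T) := by
        rw [card_simpleValues_eq_empty, Fintype.card_subtype_compl, Fintype.card_subtype_compl,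
          Fintype.card_coe, Fintype.card_coe]

lemma card_simpleValues_eq (S : Finset β) :
    #{g : α → β | simpleValues g = S} =
      (Fintype.card α).choose #S * (#S)! * z (Fintype.card β - #S) (Fintype.card α - #S) := by
  calc #{g : α → β | simpleValues g = S}
      = ∑ T : Finset α, Fintype.card {g : α → β // simpleValues g = S ∧ ∀ a, g a ∈ S ↔ a ∈ T} := by
        rw [card_eq_sum_card_fiberwise (f := fun g => ({a | g a ∈ S} : Finset α)) (t := univ)
          fun _ _ => mem_univ _]
        refine sum_congr rfl fun T _ => ?_
        rw [Fintype.card_subtype, filter_filter]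
        simp [Finset.ext_iff]
    _ = ∑ T : Finset α,
          if #T = #S then (#S)! * z (Fintype.card β - #S) (Fintype.card α - #S) else 0 := by
        refine sum_congr rfl fun T _ => ?_
        rw [card_simpleValues_eq_of_preimage, card_equiv_eq_ite, Fintype.card_coe, Fintype.card_coe]
        split_ifs with h <;> simp [h]
    _ = _ := by
        rw [sum_ite, sum_const_zero, add_zero, sum_const, smul_eq_mul, ← powerset_univ,
          ← powersetCard_eq_filter, card_powersetCard, Finset.card_univ, ← mul_assoc]

end Count

theorem card_pow_eq_sum_choose_mul_z (α β : Type*) [Fintype α] [Fintype β] [DecidableEq α]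
    [DecidableEq β] :
    Fintype.card β ^ Fintype.card α = ∑ e ∈ range (Fintype.card β + 1),
      (Fintype.card β).choose e *
      ((Fintype.card α).choose e * e ! * z (Fintype.card β - e) (Fintype.card α - e)) := by
  calc Fintype.card β ^ Fintype.card α = #(univ : Finset (α → β)) := by simp
    _ = ∑ S ∈ (univ : Finset β).powerset, #{g : α → β | simpleValues g = S} := by
        rw [powerset_univ]
        exact card_eq_sum_card_fiberwise fun _ _ => mem_univ _
    _ = _ := by
        simp_rw [card_simpleValues_eq]
        rw [sum_powerset_apply_card
          fun e => (Fintype.card α).choose e * e ! * z (Fintype.card β - e) (Fintype.card α - e)]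
        simp [mul_assoc]

theorem sum_counts_by_weight_one_rows_general (NH f : ℕ) :
    ∑ e ∈ Finset.range (min NH f + 1),
        f.choose e * NH.choose e * e.factorial * z (NH - e) (f - e) = NH ^ f := by
  have h := card_pow_eq_sum_choose_mul_z (Fin f) (Fin NH)
  simp only [Fintype.card_fin] at h
  rw [h, ← sum_subset (range_subset_range.mpr (by omega : min NH f + 1 ≤ NH + 1))]
  · exact sum_congr rfl fun e _ => by ring
  · intro e he_le he_gt
    rw [mem_range] at he_le he_gt
    rw [Nat.choose_eq_zero_of_lt (by omega : f < e)]
    simp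

/-- For `N_H ≥ 1` and `f ≥ 1`,
`Σ_{e=0}^{min(N_H,f)} C(f,e) · C(N_H,e) · e! · z(N_H−e, f−e) = N_H^f`:
the counts of column-regular `N_H × f` binary matrices classified by their exact number
`e` of weight-one rows sum to the total number `N_H^f` of column-regular matrices. -/
theorem sum_counts_by_weight_one_rows (NH f : ℕ) (hNH : 1 ≤ NH) (hf : 1 ≤ f) :
    ∑ e ∈ Finset.range (min NH f + 1),
        f.choose e * NH.choose e * e.factorial * z (NH - e) (f - e) = NH ^ f :=
  sum_counts_by_weight_one_rows_general NH f
end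

section
/- Let N_H, f ∈ ℕ with N_H ≥ 1 and f ≥ 1, let h ≥ 1, and let 0 ≤ e ≤ f. The number of h-tuples (F_1, …, F_h) of N_H × f column-regular binary matrices for which the set of initially extractable columns has cardinality exactly e equals Θ(N_H, f, h, e) := C(f, e) · Σ_{b = (b_1,…,b_h), 0 ≤ b_i ≤ e} Ψ(e, b) · ∏_{i=1}^{h} [ C(N_H, b_i) · b_i! · z(N_H − b_i, f − b_i) ]. -/
open Finset Function

section LonePoints

variable {J J' R R' : Type*} [Fintype J] [DecidableEq J] [DecidableEq R]

def lonePoints (g : J → R) : Finset J := {j | ∀ j', g j' = g j → j' = j}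

@[simp]
lemma mem_lonePoints {g : J → R} {j : J} :
    j ∈ lonePoints g ↔ ∀ j', g j' = g j → j' = j := by
  simp [lonePoints]

lemma mem_lonePoints_iff_card_fiber {g : J → R} {j : J} :
    j ∈ lonePoints g ↔ #{j' | g j' = g j} = 1 := by
  rw [card_eq_one, mem_lonePoints]
  constructor
  · exact fun hj => ⟨j, by ext j'; simpa using ⟨hj j', fun h => h ▸ rfl⟩⟩
  · rintro ⟨a, ha⟩ j' hj'
    have key : ∀ x, g x = g j ↔ x = a := fun x => by simpa using congrArg (x ∈ ·) ha
    exact ((key j').1 hj').trans ((key j).1 rfl).symm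

lemma lonePoints_eq_empty_iff {g : J → R} :
    lonePoints g = ∅ ↔ ∀ r, #{j | g j = r} ≠ 1 := by
  simp only [eq_empty_iff_forall_notMem, mem_lonePoints_iff_card_fiber]
  refine ⟨fun hg r hr => ?_, fun hg j => hg (g j)⟩
  obtain ⟨a, ha⟩ := card_eq_one.1 hr
  have hga : g a = r := by simpa using congrArg (a ∈ ·) ha
  exact hg a (hga ▸ hr)

lemma lonePoints_comp_of_injective [DecidableEq R'] {f : R → R'} (hf : Injective f)
    (g : J → R) : lonePoints (f ∘ g) = lonePoints g := by
  ext j; simp [hf.eq_iff]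

lemma lonePoints_comp_equiv [Fintype J'] [DecidableEq J'] (g : J → R) (e : J' ≃ J) :
    lonePoints (g ∘ e) = (lonePoints g).map e.symm.toEmbedding := by
  ext j
  simp only [mem_lonePoints, comp_apply, mem_map_equiv, Equiv.symm_symm]
  exact ⟨fun h j' hj' => by simpa using congrArg e (h (e.symm j') (by simpa using hj')),
    fun h j' hj' => e.injective (h (e j') hj')⟩

lemma lonePoints_eq_iff (g : J → R) (C : Finset J) :
    lonePoints g = C ↔ Injective (fun c : C => g c) ∧
      (∀ x : {x // x ∉ C}, g x ∉ univ.image (fun c : C => g c)) ∧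
      lonePoints (fun x : {x // x ∉ C} => g x) = ∅ := by
  constructor
  · rintro rfl
    refine ⟨fun c c' h => Subtype.ext (mem_lonePoints.1 c'.2 c h), ?_, ?_⟩
    · rintro ⟨x, hx⟩ hmem
      obtain ⟨c, -, hc⟩ := mem_image.1 hmem
      exact hx (mem_lonePoints.1 c.2 x hc.symm ▸ c.2)
    · refine eq_empty_of_forall_notMem fun ⟨x, hx⟩ hlone =>
        hx (mem_lonePoints.2 fun j hj => ?_)
      by_cases hjlone : j ∈ lonePoints g
      · exact absurd (mem_lonePoints.1 hjlone x hj.symm ▸ hjlone) hx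
      · exact congrArg Subtype.val (mem_lonePoints.1 hlone ⟨j, hjlone⟩ hj)
  · rintro ⟨hinj, havoid, hrest⟩
    ext j
    rw [mem_lonePoints]
    by_cases hj : j ∈ C
    · refine iff_of_true (fun j' hj' => ?_) hj
      by_cases hj'C : j' ∈ C
      · exact congrArg Subtype.val (@hinj ⟨j', hj'C⟩ ⟨j, hj⟩ hj')
      · exact absurd (mem_image.2 ⟨⟨j, hj⟩, mem_univ _, hj'.symm⟩) (havoid ⟨j', hj'C⟩)
    · refine iff_of_false (fun hlone => ?_) hj
      have hnot : (⟨j, hj⟩ : {x // x ∉ C}) ∉ lonePoints (fun x : {x // x ∉ C} => g x) :=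
        hrest ▸ notMem_empty _
      exact hnot (mem_lonePoints.2 fun x hx => Subtype.ext (hlone x hx))

end LonePoints

section ColumnRegular

variable {m n : ℕ}

def toMatrix (g : Fin n → Fin m) : Matrix (Fin m) (Fin n) Bool := Matrix.of fun i j => g j = i

lemma colRegular_toMatrix (g : Fin n → Fin m) : ColRegular (toMatrix g) := fun j =>
  card_eq_one.2 ⟨g j, by ext i; simp [toMatrix, eq_comm]⟩

lemma rowWeight_toMatrix (g : Fin n → Fin m) (i : Fin m) :
    rowWeight (toMatrix g) i = #{j | g j = i} := by
  simp [rowWeight, toMatrix]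

lemma toMatrix_injective : Injective (toMatrix (m := m) (n := n)) := fun g g' h =>
  funext fun j => Eq.symm <| by simpa [toMatrix] using congrFun (congrFun h (g j)) j

lemma exists_toMatrix_eq {F : Matrix (Fin m) (Fin n) Bool} (hF : ColRegular F) :
    ∃ g, toMatrix g = F := by
  choose g hg using fun j => card_eq_one.1 (hF j)
  refine ⟨g, Matrix.ext fun i j => ?_⟩
  have hFij : F i j = true ↔ i = g j := by simpa using congrArg (i ∈ ·) (hg j)
  rw [toMatrix, Matrix.of_apply, Bool.eq_iff_iff, hFij, decide_eq_true_iff, eq_comm]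

noncomputable def colRegularEquiv :
    (Fin n → Fin m) ≃ {F : Matrix (Fin m) (Fin n) Bool // ColRegular F} :=
  Equiv.ofBijective (fun g => ⟨toMatrix g, colRegular_toMatrix g⟩)
    ⟨fun _ _ h => toMatrix_injective (congrArg Subtype.val h),
     fun F => (exists_toMatrix_eq F.2).imp fun _ hg => Subtype.ext hg⟩

@[simp]
lemma coe_colRegularEquiv (g : Fin n → Fin m) :
    (colRegularEquiv g : Matrix (Fin m) (Fin n) Bool) = toMatrix g :=
  rfl

noncomputable def colRegularTupleEquiv (ι : Type*) :
    (ι → Fin n → Fin m) ≃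
      {G : ι → Matrix (Fin m) (Fin n) Bool // ∀ i, ColRegular (G i)} :=
  (Equiv.piCongrRight fun _ => colRegularEquiv).trans Equiv.subtypePiEquivPi.symm

@[simp]
lemma coe_colRegularTupleEquiv {ι : Type*} (g : ι → Fin n → Fin m) :
    (colRegularTupleEquiv ι g : ι → Matrix (Fin m) (Fin n) Bool) = fun i => toMatrix (g i) :=
  rfl

lemma pivotal_toMatrix_iff {g : Fin n → Fin m} {j : Fin n} :
    Pivotal (toMatrix g) j ↔ j ∈ lonePoints g := by
  simp only [Pivotal, rowWeight_toMatrix, mem_lonePoints_iff_card_fiber]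
  simp [toMatrix]

lemma filter_extractable_toMatrix {h : ℕ} (g : Fin h → Fin n → Fin m) :
    univ.filter (fun j => Extractable (fun i => toMatrix (g i)) j) =
      univ.biUnion fun i => lonePoints (g i) := by
  ext j
  simp [Extractable, pivotal_toMatrix_iff]

lemma isStopping_toMatrix_iff {g : Fin n → Fin m} :
    IsStopping (toMatrix g) ↔ lonePoints g = ∅ := by
  simp [IsStopping, colRegular_toMatrix, rowWeight_toMatrix, lonePoints_eq_empty_iff]

lemma z_eq_card_lonePoints_eq_empty (m n : ℕ) :
    z m n = Fintype.card {g : Fin n → Fin m // lonePoints g = ∅} :=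
  Fintype.card_congr <| (Equiv.subtypeSubtypeEquivSubtypeInter _ _).symm.trans
    (colRegularEquiv.subtypeEquiv fun g => by
      simp [← isStopping_toMatrix_iff, IsStopping, colRegular_toMatrix]).symm

end ColumnRegular

section Counting

variable {J K R : Type*} [Fintype J] [DecidableEq J] [Fintype K] [DecidableEq K] [Fintype R]
  [DecidableEq R]

lemma card_lonePoints_eq_empty :
    Fintype.card {g : J → R // lonePoints g = ∅} = z (Fintype.card R) (Fintype.card J) := by
  rw [z_eq_card_lonePoints_eq_empty]
  refine Fintype.card_congr
    ((Equiv.arrowCongr (Fintype.equivFin J) (Fintype.equivFin R)).subtypeEquiv fun g => ?_)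
  change _ ↔ lonePoints (Fintype.equivFin R ∘ (g ∘ (Fintype.equivFin J).symm)) = ∅
  rw [lonePoints_comp_of_injective (Equiv.injective _), lonePoints_comp_equiv, map_eq_empty]

lemma card_lonePoints_eq_empty_of_forall_notMem (S : Finset R) :
    Fintype.card {g : K → R // (∀ x, g x ∉ S) ∧ lonePoints g = ∅} =
      z (Fintype.card R - #S) (Fintype.card K) := by
  have hcodomain : Fintype.card {r // r ∉ S} = Fintype.card R - #S := by
    rw [Fintype.card_subtype_compl, Fintype.card_coe]
  rw [← hcodomain, ← card_lonePoints_eq_empty]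
  refine Fintype.card_congr <| (Equiv.subtypeSubtypeEquivSubtypeInter _ _).symm.trans
    ((Equiv.subtypePiEquivPi (p := fun _ r => r ∉ S)).subtypeEquiv fun g => ?_)
  rw [← lonePoints_comp_of_injective Subtype.val_injective]
  rfl

lemma card_lonePoints_eq (C : Finset J) :
    Fintype.card {g : J → R // lonePoints g = C} =
      (Fintype.card R).choose #C * (#C).factorial *
        z (Fintype.card R - #C) (Fintype.card J - #C) := by
  set w := z (Fintype.card R - #C) (Fintype.card J - #C)
  have hrest (φ : C → R) (hφ : Injective φ) :
      Fintype.card {ψ : {x // x ∉ C} → R //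
        (∀ x, ψ x ∉ univ.image φ) ∧ lonePoints ψ = ∅} = w := by
    rw [card_lonePoints_eq_empty_of_forall_notMem, card_image_of_injective _ hφ, card_univ,
      Fintype.card_coe, Fintype.card_subtype_compl, Fintype.card_coe]
  calc Fintype.card {g : J → R // lonePoints g = C}
      = Fintype.card {p : (C → R) × ({x // x ∉ C} → R) //
          Injective p.1 ∧ (∀ x, p.2 x ∉ univ.image p.1) ∧ lonePoints p.2 = ∅} :=
        Fintype.card_congr ((Equiv.piEquivPiSubtypeProd (· ∈ C) _).subtypeEquiv
          fun g => lonePoints_eq_iff g C)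
    _ = ∑ φ : C → R, Fintype.card {ψ : {x // x ∉ C} → R //
          Injective φ ∧ (∀ x, ψ x ∉ univ.image φ) ∧ lonePoints ψ = ∅} := by
        rw [← Fintype.card_sigma]
        exact Fintype.card_congr (Equiv.subtypeProdEquivSigmaSubtype fun (φ : C → R) ψ =>
          Injective φ ∧ (∀ x, ψ x ∉ univ.image φ) ∧ lonePoints ψ = ∅)
    _ = ∑ φ : C → R, if Injective φ then w else 0 := by
        refine sum_congr rfl fun φ _ => ?_
        split_ifs with hφ
        · simp only [hφ, true_and, hrest φ hφ]
        · simp [hφ]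
    _ = Fintype.card (C ↪ R) * w := by
        rw [sum_ite, sum_const_zero, add_zero, sum_const, smul_eq_mul, ← Fintype.card_subtype,
          Fintype.card_congr (Equiv.subtypeInjectiveEquivEmbedding _ _)]
    _ = (Fintype.card R).choose #C * (#C).factorial * w := by
        rw [Fintype.card_embedding_eq, Fintype.card_coe, Nat.descFactorial_eq_factorial_mul_choose,
          mul_comm (#C).factorial]

end Counting

section Covers

variable {ι α β : Type*} [Fintype ι] [DecidableEq ι] [Fintype α] [DecidableEq β]

lemma card_pi_comp_mem (s : α → β) (T : Finset (ι → β))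
    [∀ b : β, Fintype {a // s a = b}] :
    Fintype.card {x : ι → α // (fun i => s (x i)) ∈ T} =
      ∑ c ∈ T, ∏ i, Fintype.card {a // s a = c i} := by
  rw [Fintype.card_subtype, card_eq_sum_card_fiberwise (f := fun x i => s (x i))
    (s := {x : ι → α | (fun i => s (x i)) ∈ T}) (t := T) fun x hx => (mem_filter.1 hx).2]
  refine sum_congr rfl fun c hc => ?_
  calc #{x ∈ {x : ι → α | (fun i => s (x i)) ∈ T} | (fun i => s (x i)) = c}
      = Fintype.card {x : ι → α // ∀ i, s (x i) = c i} := by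
        rw [filter_filter, Fintype.card_subtype]
        refine congrArg card (filter_congr fun x _ => ⟨fun h => congrFun h.2, fun h => ?_⟩)
        exact ⟨funext h ▸ hc, funext h⟩
    _ = ∏ i, Fintype.card {a // s a = c i} := by
        rw [Fintype.card_congr (Equiv.subtypePiEquivPi (p := fun i a => s a = c i)),
          Fintype.card_pi]

variable [DecidableEq α] [Fintype β]

lemma card_covers_map (σ : α ↪ β) (b : ι → ℕ) :
    Fintype.card {D : ι → Finset β // (∀ i, #(D i) = b i) ∧ univ.biUnion D = univ.map σ} =
      Fintype.card {C : ι → Finset α // (∀ i, #(C i) = b i) ∧ univ.biUnion C = univ} := by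
  have hmap (C : ι → Finset α) :
      univ.biUnion (fun i => (C i).map σ) = (univ.biUnion C).map σ := by
    simp only [map_eq_image, biUnion_image]
  refine (Fintype.card_of_bijective (f := fun C => ⟨fun i => (C.1 i).map σ,
    fun i => by rw [card_map, C.2.1], by rw [hmap, C.2.2]⟩)
    ⟨fun C C' h => ?_, fun D => ?_⟩).symm
  · exact Subtype.ext (funext fun i => map_injective σ (congrFun (congrArg Subtype.val h) i))
  · have hsub (i : ι) : D.1 i ⊆ univ.map σ :=
      (subset_biUnion_of_mem D.1 (mem_univ i)).trans_eq D.2.2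
    choose C _ hC using fun i => subset_map_iff.1 (hsub i)
    refine ⟨⟨C, fun i => by rw [← D.2.1 i, hC, card_map], map_injective σ ?_⟩,
      Subtype.ext (funext fun i => (hC i).symm)⟩
    rw [← hmap]
    exact (congrArg (univ.biUnion ·) (funext hC).symm).trans D.2.2

lemma card_covers_eq_psi {h : ℕ} (E : Finset β) (b : Fin h → ℕ) :
    Fintype.card {C : Fin h → Finset β // (∀ i, #(C i) = b i) ∧ univ.biUnion C = E} =
      Psi h #E b := by
  let σ : Fin #E ↪ β := E.equivFin.symm.toEmbedding.trans (Embedding.subtype _)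
  have hσ : univ.map σ = E := by
    rw [← map_map, univ_map_equiv_to_embedding, univ_eq_attach, attach_map_val]
  have hcovers := card_covers_map (ι := Fin h) σ b
  rw [hσ] at hcovers
  unfold Psi
  convert hcovers

lemma sum_covers_eq_sum_psi {h : ℕ} (F : (Fin h → ℕ) → ℕ) (E : Finset β) :
    ∑ C ∈ {C : Fin h → Finset β | univ.biUnion C = E}, F (fun i => #(C i)) =
      ∑ b ∈ Fintype.piFinset fun _ => range (#E + 1), Psi h #E b * F b := by
  have hcard (C : Fin h → Finset β) (hC : univ.biUnion C = E) :
      (fun i => #(C i)) ∈ Fintype.piFinset fun _ => range (#E + 1) := by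
    refine Fintype.mem_piFinset.2 fun i => mem_range_succ_iff.2 (card_le_card ?_)
    rw [← hC]
    exact subset_biUnion_of_mem C (mem_univ i)
  rw [← sum_fiberwise_of_maps_to fun C hC => hcard C (mem_filter.1 hC).2]
  refine sum_congr rfl fun b _ => ?_
  rw [sum_congr rfl fun C hC => congrArg F (mem_filter.1 hC).2, sum_const, smul_eq_mul,
    ← card_covers_eq_psi, Fintype.card_subtype, filter_filter]
  refine congrArg (#· * F b) (filter_congr fun C _ => ?_)
  rw [and_comm, funext_iff]

end Covers

section Tuples

variable {J R : Type*} [Fintype J] [DecidableEq J] [Fintype R] [DecidableEq R] {h : ℕ}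

lemma card_tuples_lonePoints_biUnion_eq (E : Finset J) :
    Fintype.card {G : Fin h → J → R // univ.biUnion (fun i => lonePoints (G i)) = E} =
      ∑ b ∈ Fintype.piFinset fun _ => range (#E + 1), Psi h #E b * ∏ i,
        ((Fintype.card R).choose (b i) * (b i).factorial *
          z (Fintype.card R - b i) (Fintype.card J - b i)) := by
  have hfiber := card_pi_comp_mem (ι := Fin h) (lonePoints (J := J) (R := R))
    {C : Fin h → Finset J | univ.biUnion C = E}
  simp only [mem_filter, mem_univ, true_and, card_lonePoints_eq] at hfiber
  rw [hfiber, sum_covers_eq_sum_psi (fun b => ∏ i, ((Fintype.card R).choose (b i) *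
    (b i).factorial * z (Fintype.card R - b i) (Fintype.card J - b i)))]

lemma card_tuples_lonePoints_biUnion_card_eq (e : ℕ) :
    Fintype.card {G : Fin h → J → R // #(univ.biUnion fun i => lonePoints (G i)) = e} =
      (Fintype.card J).choose e * ∑ b ∈ Fintype.piFinset fun _ => range (e + 1),
        Psi h e b * ∏ i, ((Fintype.card R).choose (b i) * (b i).factorial *
          z (Fintype.card R - b i) (Fintype.card J - b i)) := by
  rw [Fintype.card_subtype, card_eq_sum_card_fiberwise
    (f := fun G : Fin h → J → R => univ.biUnion fun i => lonePoints (G i))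
    (t := powersetCard e univ) fun G hG => by simpa using hG]
  rw [sum_const_nat fun E hE => ?_, card_powersetCard, card_univ]
  rw [mem_powersetCard_univ] at hE
  rw [← hE, ← card_tuples_lonePoints_biUnion_eq, Fintype.card_subtype, filter_filter]
  exact congrArg card (filter_congr fun G _ => ⟨And.right, fun hG => ⟨hG ▸ rfl, hG⟩⟩)

end Tuples

theorem count_tuples_exactly_e_extractable_general (NH f h e : ℕ) :
    Fintype.card {G : Fin h → Matrix (Fin NH) (Fin f) Bool //
        (∀ i, ColRegular (G i)) ∧
        (Finset.univ.filter (fun j => Extractable G j)).card = e} =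
      Theta NH f h e := by
  have hcount := card_tuples_lonePoints_biUnion_card_eq (J := Fin f) (R := Fin NH) (h := h) e
  simp only [Fintype.card_fin] at hcount
  rw [Theta, ← hcount]
  refine Fintype.card_congr (((colRegularTupleEquiv (Fin h)).subtypeEquiv fun g => ?_).trans
    (Equiv.subtypeSubtypeEquivSubtypeInter _ _)).symm
  rw [coe_colRegularTupleEquiv, filter_extractable_toMatrix]

/-- For `N_H ≥ 1`, `f ≥ 1`, `h ≥ 1` and `0 ≤ e ≤ f`, the number of
`h`-tuples `(F_1, …, F_h)` of `N_H × f` column-regular binary matrices whose set of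
initially extractable columns has cardinality exactly `e` equals `Θ(N_H, f, h, e)`. -/
theorem count_tuples_exactly_e_extractable (NH f h e : ℕ)
    (hNH : 1 ≤ NH) (hf : 1 ≤ f) (hh : 1 ≤ h) (he : e ≤ f) :
    Fintype.card {G : Fin h → Matrix (Fin NH) (Fin f) Bool //
        (∀ i, ColRegular (G i)) ∧
        (Finset.univ.filter (fun j => Extractable G j)).card = e} =
      Theta NH f h e :=
  count_tuples_exactly_e_extractable_general NH f h e
end

section
/- Let N_H ≥ 1, f ≥ 1, h ≥ 1 and 0 ≤ y ≤ f. The number of h-tuples (F_1, …, F_h) of N_H × f column-regular binary matrices whose set of initially extractable columns has cardinality at least y equals Σ_{e=y}^{f} Θ(N_H, f, h, e); equivalently, under the uniform distribution on all N_H^{h·f} such h-tuples, the probability that at least y columns are initially extractable equals Σ_{e=y}^{f} Θ(N_H, f, h, e) / N_H^{h·f}. -/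
/-!
A column-regular `N_H × f` matrix is a map `g : [f] → [N_H]` sending each column to the row of
its nonzero entry. A column `j` is pivotal when it is the only preimage of `g j`, and stopping
matrices are the maps without pivotal columns. A map whose set of pivotal columns is `C` is an
injection on `C` together with a pivot-free map from the complement of `C` to the complement of
the image of `C`; hence there are `C(N_H, |C|) · |C|! · z(N_H - |C|, f - |C|)` of them. In an
`h`-tuple the pivot sets are chosen independently, so grouping the tuples by the union `E` of
their pivot sets and then by the sizes `b` of the pivot sets, the tuples of sets covering `E`
are counted by `Ψ(|E|, b)`; summing over the `C(f, e)` sets `E` of size `e` gives `Θ`.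
-/

open Finset Function

section Pivots

variable {α β γ : Type*} [Fintype α] [DecidableEq α] [DecidableEq β]

def pivots (g : α → β) : Finset α := {j | ∀ j', g j' = g j → j' = j}

theorem mem_pivots {g : α → β} {j : α} : j ∈ pivots g ↔ ∀ j', g j' = g j → j' = j := by
  simp [pivots]

theorem card_fiber_eq_one_iff (g : α → β) (j : α) :
    #{j' | g j' = g j} = 1 ↔ j ∈ pivots g := by
  rw [card_eq_one, mem_pivots]
  constructor
  · rintro ⟨a, ha⟩ j' hj'
    have hj : j ∈ ({j' | g j' = g j} : Finset α) := by simp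
    have hj'' : j' ∈ ({j' | g j' = g j} : Finset α) := by simpa using hj'
    rw [ha, mem_singleton] at hj hj''
    rw [hj, hj'']
  · intro hj
    exact ⟨j, by ext j'; simpa using ⟨hj j', fun h => h ▸ rfl⟩⟩

theorem pivots_eq_empty_iff (g : α → β) : pivots g = ∅ ↔ ∀ b, #{j | g j = b} ≠ 1 := by
  constructor
  · intro hg b hb
    obtain ⟨j, hj⟩ := card_eq_one.1 hb
    have hjb : j ∈ ({j | g j = b} : Finset α) := hj ▸ mem_singleton_self j
    rw [← (mem_filter_univ _).1 hjb, card_fiber_eq_one_iff, hg] at hb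
    simp at hb
  · intro hg
    ext j
    simpa using mt (card_fiber_eq_one_iff g j).2 (hg (g j))

theorem pivots_comp_of_injective [DecidableEq γ] {φ : β → γ} (hφ : Injective φ)
    (g : α → β) :
    pivots (φ ∘ g) = pivots g := by
  ext j
  simp [mem_pivots, hφ.eq_iff]

theorem pivots_comp_equiv {α' : Type*} [Fintype α'] [DecidableEq α'] (g : α → β)
    (σ : α' ≃ α) :
    pivots (g ∘ σ) = (pivots g).map σ.symm.toEmbedding := by
  ext j
  simp only [mem_pivots, comp_apply, mem_map_equiv, Equiv.symm_symm]
  rw [σ.forall_congr_left]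
  simp [σ.symm_apply_eq]

def extractableSet {ι : Type*} [Fintype ι] (G : ι → α → β) : Finset α :=
  univ.biUnion fun i => pivots (G i)

end Pivots

theorem card_filter_and_of_iff_mem_range {γ δ : Type*} [Fintype γ] [Fintype δ] [DecidableEq δ]
    {φ : γ → δ} (hφ : Injective φ) {S P : δ → Prop} [DecidablePred S] [DecidablePred P]
    (hS : ∀ x, S x ↔ x ∈ Set.range φ) : #{x | S x ∧ P x} = #{y | P (φ y)} := by
  rw [← card_image_of_injective _ hφ]
  congr 1
  ext x
  simp only [mem_filter_univ, mem_image, hS]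
  constructor
  · rintro ⟨⟨y, rfl⟩, hx⟩
    exact ⟨y, hx, rfl⟩
  · rintro ⟨y, hy, rfl⟩
    exact ⟨⟨y, rfl⟩, hy⟩

section Matrices

variable {m n : ℕ}

def matrixOf (g : Fin n → Fin m) : Matrix (Fin m) (Fin n) Bool := fun i j => decide (g j = i)

theorem matrixOf_injective : Injective (matrixOf : (Fin n → Fin m) → _) := by
  intro g g' h
  funext j
  have hj := congrFun (congrFun h (g j)) j
  simpa [matrixOf, eq_comm] using hj

theorem colRegular_iff_exists_matrixOf (F : Matrix (Fin m) (Fin n) Bool) :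
    ColRegular F ↔ ∃ g, matrixOf g = F := by
  simp only [ColRegular, colWeight, card_eq_one, Classical.skolem]
  refine exists_congr fun g => ?_
  rw [← Matrix.ext_iff, forall_comm]
  simp only [Finset.ext_iff, mem_filter_univ, mem_singleton, matrixOf]
  refine forall₂_congr fun j i => ?_
  cases F i j <;> simp [eq_comm]

theorem rowWeight_matrixOf (g : Fin n → Fin m) (i : Fin m) :
    rowWeight (matrixOf g) i = #{j | g j = i} := by
  simp [rowWeight, matrixOf]

theorem pivotal_matrixOf_iff (g : Fin n → Fin m) (j : Fin n) :
    Pivotal (matrixOf g) j ↔ j ∈ pivots g := by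
  simp [Pivotal, matrixOf, rowWeight_matrixOf, card_fiber_eq_one_iff]

theorem extractable_comp_matrixOf_iff {h : ℕ} (g : Fin h → Fin n → Fin m) (j : Fin n) :
    Extractable (matrixOf ∘ g) j ↔ j ∈ extractableSet g := by
  simp [Extractable, extractableSet, pivotal_matrixOf_iff]

theorem z_eq_card_pivots_eq_empty (m n : ℕ) :
    z m n = #{g : Fin n → Fin m | pivots g = ∅} := by
  change Fintype.card
    {F : Matrix (Fin m) (Fin n) Bool // ColRegular F ∧ ∀ i, rowWeight F i ≠ 1} = _
  rw [Fintype.card_subtype,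
    card_filter_and_of_iff_mem_range matrixOf_injective colRegular_iff_exists_matrixOf]
  simp only [rowWeight_matrixOf, pivots_eq_empty_iff]

end Matrices

section Counting

variable {α β : Type*} [Fintype α] [DecidableEq α] [Fintype β] [DecidableEq β]

theorem card_pivots_eq_empty :
    #{g : α → β | pivots g = ∅} = z (Fintype.card β) (Fintype.card α) := by
  rw [z_eq_card_pivots_eq_empty]
  refine card_equiv ((Fintype.equivFin α).arrowCongr (Fintype.equivFin β)) fun g => ?_
  rw [mem_filter_univ, mem_filter_univ]
  change pivots g = ∅ ↔ pivots (Fintype.equivFin β ∘ g ∘ (Fintype.equivFin α).symm) = ∅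
  rw [pivots_comp_of_injective (Fintype.equivFin β).injective, pivots_comp_equiv, map_eq_empty]

theorem card_pivots_eq_empty_of_mapsTo (D : Finset β) :
    #{g : α → β | (∀ j, g j ∈ D) ∧ pivots g = ∅} = z #D (Fintype.card α) := by
  rw [← Fintype.card_coe D, ← card_pivots_eq_empty,
    card_filter_and_of_iff_mem_range (φ := fun (w : α → D) => Subtype.val ∘ w)
      Subtype.val_injective.comp_left (fun g => ?_)]
  · simp only [pivots_comp_of_injective Subtype.val_injective]
  · refine ⟨fun hg => ⟨fun j => ⟨g j, hg j⟩, rfl⟩, ?_⟩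
    rintro ⟨w, rfl⟩ j
    exact (w j).2

theorem pivots_eq_iff (C : Finset α) (g : α → β) :
    pivots g = C ↔ Injective (fun c : C => g c) ∧
      (∀ x : {x // x ∉ C}, g x ∈ (univ.image fun c : C => g c)ᶜ) ∧
      pivots (fun x : {x // x ∉ C} => g x) = ∅ := by
  simp only [mem_compl, mem_image, mem_univ, true_and, not_exists, Finset.ext_iff, mem_pivots,
    notMem_empty, iff_false, not_forall]
  constructor
  · intro hg
    have hC {c} (hc : c ∈ C) {j} (hj : g j = g c) : j = c := (hg c).2 hc j hj
    refine ⟨fun a b hab => Subtype.ext (hC b.2 hab), fun x c hc => x.2 (hC c.2 hc.symm ▸ c.2),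
      fun x => ?_⟩
    obtain ⟨j, hj, hjx⟩ : ∃ j, g j = g x ∧ j ≠ x := by
      simpa using mt (hg x).1 x.2
    have hjC : j ∉ C := fun hjC => hjx (hC hjC hj.symm).symm
    exact ⟨⟨j, hjC⟩, hj, fun h => hjx (congrArg Subtype.val h)⟩
  · rintro ⟨hinj, hout, hnot⟩ j
    refine ⟨fun hj => by_contra fun hjC => ?_, fun hjC j' hj' => ?_⟩
    · obtain ⟨x, hx, hxj⟩ := hnot ⟨j, hjC⟩
      exact hxj (Subtype.ext (hj x hx))
    · by_cases hj'C : j' ∈ C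
      · exact congrArg Subtype.val (@hinj ⟨j', hj'C⟩ ⟨j, hjC⟩ hj')
      · exact absurd hj'.symm (hout ⟨j', hj'C⟩ ⟨j, hjC⟩)

theorem card_pivots_eq (C : Finset α) :
    #{g : α → β | pivots g = C} = (Fintype.card β).choose #C * (#C).factorial *
      z (Fintype.card β - #C) (Fintype.card α - #C) := by
  let e : (α → β) ≃ (C → β) × ({x // x ∉ C} → β) :=
    ((Equiv.sumCompl (· ∈ C)).arrowCongr (Equiv.refl β)).symm.trans
      (Equiv.sumArrowEquivProdArrow _ _ β)
  have hsplit : #{g : α → β | pivots g = C} = #{p : (C → β) × ({x // x ∉ C} → β) |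
      Injective p.1 ∧ (∀ x, p.2 x ∈ (univ.image p.1)ᶜ) ∧ pivots p.2 = ∅} :=
    card_equiv e fun g => by
      have he : e g = (fun c : C => g c, fun x : {x // x ∉ C} => g x) := rfl
      rw [mem_filter_univ, mem_filter_univ, pivots_eq_iff, he]
  have hfiber (u : C → β) : ∑ v : {x // x ∉ C} → β,
      (if Injective u ∧ (∀ x, v x ∈ (univ.image u)ᶜ) ∧ pivots v = ∅ then 1 else 0) =
      if Injective u then z (Fintype.card β - #C) (Fintype.card α - #C) else 0 := by
    split_ifs with hu
    · simp only [hu, true_and]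
      rw [← card_filter, card_pivots_eq_empty_of_mapsTo, card_compl, card_image_of_injective _ hu,
        card_univ, Fintype.card_coe, Fintype.card_subtype_compl, Fintype.card_coe]
    · simp [hu]
  have hinj : #{u : C → β | Injective u} = (Fintype.card β).descFactorial #C := by
    rw [← Fintype.card_subtype, Fintype.card_congr (Equiv.subtypeInjectiveEquivEmbedding _ _),
      Fintype.card_embedding_eq, Fintype.card_coe]
  rw [hsplit, card_filter, Fintype.sum_prod_type, sum_congr rfl fun u _ => hfiber u, ← sum_filter,
    sum_const, smul_eq_mul, hinj, Nat.descFactorial_eq_factorial_mul_choose,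
    mul_comm (#C).factorial]

end Counting

theorem card_tuples_biUnion_eq_psi {α : Type*} [Fintype α] [DecidableEq α] {h : ℕ}
    (E : Finset α) (b : Fin h → ℕ) :
    #{C : Fin h → Finset α | (∀ i, #(C i) = b i) ∧ univ.biUnion C = E} = Psi h #E b := by
  set φ : Fin #E → α := Subtype.val ∘ E.equivFin.symm
  have hφ : Injective φ := Subtype.val_injective.comp E.equivFin.symm.injective
  have hφE : univ.image φ = E := by
    ext a
    simp only [mem_image, mem_univ, true_and, φ, comp_apply]
    exact ⟨by rintro ⟨k, rfl⟩; exact Subtype.prop _,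
      fun ha => ⟨E.equivFin ⟨a, ha⟩, by simp⟩⟩
  rw [Psi, Fintype.card_subtype]
  symm
  refine card_bij (fun C _ i => (C i).image φ) (fun C hC => ?_) (fun C _ C' _ hCC' => ?_)
    (fun C' hC' => ?_)
  · simp only [mem_filter_univ] at hC ⊢
    refine ⟨fun i => by rw [card_image_of_injective _ hφ, hC.1], ?_⟩
    rw [← biUnion_image, hC.2, hφE]
  · exact funext fun i => image_injective hφ (congrFun hCC' i)
  · simp only [mem_filter_univ] at hC' ⊢
    have hsub (i : Fin h) : C' i ⊆ univ.image φ := by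
      rw [hφE, ← hC'.2]
      exact subset_biUnion_of_mem C' (mem_univ i)
    choose C hC using fun i => subset_image_iff.1 (hsub i)
    refine ⟨C, ⟨fun i => ?_, ?_⟩, funext fun i => (hC i).2⟩
    · rw [← hC'.1 i, ← (hC i).2, card_image_of_injective _ hφ]
    · apply image_injective hφ
      rw [biUnion_image]
      exact (biUnion_congr rfl fun i _ => (hC i).2).trans (hC'.2.trans hφE.symm)

section Tuples

variable {α β : Type*} [Fintype α] [DecidableEq α] [Fintype β] [DecidableEq β] {h : ℕ}

theorem card_tuples_pivots_eq (C : Fin h → Finset α) :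
    #{G : Fin h → α → β | ∀ i, pivots (G i) = C i} =
      ∏ i, #{g : α → β | pivots g = C i} := by
  rw [← Fintype.card_piFinset]
  congr 1
  ext G
  simp [Fintype.mem_piFinset]

theorem card_extractableSet_eq (E : Finset α) :
    #{G : Fin h → α → β | extractableSet G = E} =
      ∑ b ∈ Fintype.piFinset (fun _ : Fin h => range (#E + 1)), Psi h #E b *
        ∏ i, ((Fintype.card β).choose (b i) * (b i).factorial *
          z (Fintype.card β - b i) (Fintype.card α - b i)) := by
  set M : ℕ → ℕ := fun k => (Fintype.card β).choose k * k.factorial *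
    z (Fintype.card β - k) (Fintype.card α - k)
  have hsizes : ∀ C ∈ ({C : Fin h → Finset α | univ.biUnion C = E} : Finset _),
      (fun i => #(C i)) ∈ Fintype.piFinset (fun _ : Fin h => range (#E + 1)) := by
    intro C hC
    simp only [Fintype.mem_piFinset, mem_range, Nat.lt_succ_iff]
    intro i
    rw [← (mem_filter_univ _).1 hC]
    exact card_le_card (subset_biUnion_of_mem C (mem_univ i))
  calc #{G : Fin h → α → β | extractableSet G = E}
      = ∑ C : Fin h → Finset α with univ.biUnion C = E,
          #{G : Fin h → α → β | ∀ i, pivots (G i) = C i} := by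
        have := sum_card_fiberwise_eq_card_filter univ {C | univ.biUnion C = E}
          fun (G : Fin h → α → β) i => pivots (G i)
        simp only [funext_iff, mem_filter_univ] at this
        exact this.symm
    _ = ∑ C : Fin h → Finset α with univ.biUnion C = E, ∏ i, M #(C i) := by
        simp only [card_tuples_pivots_eq, card_pivots_eq, M]
    _ = ∑ b ∈ Fintype.piFinset (fun _ : Fin h => range (#E + 1)),
          Psi h #E b * ∏ i, M (b i) := by
        rw [← sum_fiberwise_of_maps_to hsizes]
        refine sum_congr rfl fun b _ => ?_
        rw [sum_congr rfl fun C hC => show ∏ i, M #(C i) = ∏ i, M (b i) by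
            simp only [← (mem_filter.1 hC).2], sum_const, smul_eq_mul,
          filter_filter, ← card_tuples_biUnion_eq_psi]
        simp only [funext_iff, and_comm]

theorem card_card_extractableSet_eq (e : ℕ) :
    #{G : Fin h → α → β | #(extractableSet G) = e} =
      Theta (Fintype.card β) (Fintype.card α) h e := by
  have := sum_card_fiberwise_eq_card_filter univ (powersetCard e univ)
    fun (G : Fin h → α → β) => extractableSet G
  simp only [mem_powersetCard_univ] at this
  rw [← this,
    sum_const_nat fun E hE => by rw [card_extractableSet_eq, mem_powersetCard_univ.1 hE],
    card_powersetCard, card_univ, Theta]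

theorem card_card_extractableSet_ge (y : ℕ) :
    #{G : Fin h → α → β | y ≤ #(extractableSet G)} =
      ∑ e ∈ Icc y (Fintype.card α), Theta (Fintype.card β) (Fintype.card α) h e := by
  have := sum_card_fiberwise_eq_card_filter univ (Icc y (Fintype.card α))
    fun (G : Fin h → α → β) => #(extractableSet G)
  simp only [mem_Icc, card_le_univ, and_true] at this
  simp only [← this, card_card_extractableSet_eq]

end Tuples

theorem count_tuples_at_least_y_extractable_general (NH f h y : ℕ) :
    Fintype.card {G : Fin h → Matrix (Fin NH) (Fin f) Bool //
        (∀ i, ColRegular (G i)) ∧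
        y ≤ (Finset.univ.filter (fun j => Extractable G j)).card} =
      ∑ e ∈ Finset.Icc y f, Theta NH f h e ∧
    (Fintype.card {G : Fin h → Matrix (Fin NH) (Fin f) Bool //
          (∀ i, ColRegular (G i)) ∧
          y ≤ (Finset.univ.filter (fun j => Extractable G j)).card} : ℚ) /
        (NH : ℚ) ^ (h * f) =
      (∑ e ∈ Finset.Icc y f, (Theta NH f h e : ℚ)) / (NH : ℚ) ^ (h * f) := by
  have hcolRegular (G : Fin h → Matrix (Fin NH) (Fin f) Bool) :
      (∀ i, ColRegular (G i)) ↔ G ∈ Set.range (matrixOf ∘ ·) := by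
    simp only [colRegular_iff_exists_matrixOf, Classical.skolem, Set.mem_range, funext_iff,
      comp_apply]
  have hcount : Fintype.card {G : Fin h → Matrix (Fin NH) (Fin f) Bool //
      (∀ i, ColRegular (G i)) ∧ y ≤ #{j | Extractable G j}} =
        ∑ e ∈ Icc y f, Theta NH f h e := by
    rw [Fintype.card_subtype,
      card_filter_and_of_iff_mem_range matrixOf_injective.comp_left hcolRegular]
    simp only [extractable_comp_matrixOf_iff, filter_mem_eq_inter, univ_inter]
    simpa using card_card_extractableSet_ge (α := Fin f) (β := Fin NH) (h := h) y
  exact ⟨hcount, by rw [hcount, Nat.cast_sum]⟩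

/-- For `N_H ≥ 1`, `f ≥ 1`, `h ≥ 1` and `0 ≤ y ≤ f`, the number of
`h`-tuples of `N_H × f` column-regular binary matrices whose set of initially
extractable columns has cardinality at least `y` equals `Σ_{e=y}^{f} Θ(N_H, f, h, e)`;
equivalently, under the uniform distribution on all `N_H^{h·f}` such tuples, the
probability that at least `y` columns are initially extractable equals
`Σ_{e=y}^{f} Θ(N_H, f, h, e) / N_H^{h·f}`. -/
theorem count_tuples_at_least_y_extractable (NH f h y : ℕ)
    (hNH : 1 ≤ NH) (hf : 1 ≤ f) (hh : 1 ≤ h) (hy : y ≤ f) :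
    Fintype.card {G : Fin h → Matrix (Fin NH) (Fin f) Bool //
        (∀ i, ColRegular (G i)) ∧
        y ≤ (Finset.univ.filter (fun j => Extractable G j)).card} =
      ∑ e ∈ Finset.Icc y f, Theta NH f h e ∧
    (Fintype.card {G : Fin h → Matrix (Fin NH) (Fin f) Bool //
          (∀ i, ColRegular (G i)) ∧
          y ≤ (Finset.univ.filter (fun j => Extractable G j)).card} : ℚ) /
        (NH : ℚ) ^ (h * f) =
      (∑ e ∈ Finset.Icc y f, (Theta NH f h e : ℚ)) / (NH : ℚ) ^ (h * f) :=
  count_tuples_at_least_y_extractable_general NH f h y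
end
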